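/- arXiv:1603.04780 — 4 statements merged into one kernel-verified Lean document; each statement's English description precedes it below -/
import Mathlib

section
/- (Gronwall variant.) Let a ≤ b, let λ : [a, b] → ℝ be continuously differentiable with λ(a) = 0, let μ ≥ 0 be a constant, and let y : [a, b] → ℝ be continuous and satisfy y(t) ≤ λ(t) + ∫_a^t μ y(s) ds for all t ∈ [a, b]. Then y(t) ≤ ∫_a^t e^{μ(t−s)} λ'(s) ds for all t ∈ [a, b]. -/
/-!
The right-hand side `u t = ∫_a^t e^{μ(t-s)} λ'(s) ds` is, by variation of constants, the solution
of the equality case `u t = λ t + ∫_a^t μ u`. The difference `d = y - u` then satisfies the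
homogeneous inequality `d t ≤ ∫_a^t μ d`, so `G t = ∫_a^t d` obeys `G' ≤ μ G` with `G a = 0`;
hence `e^{-μt} G t` is antitone and nonpositive, and `d ≤ μ G ≤ 0` because `μ ≥ 0`.
-/

open Set Real intervalIntegral

section Primitive

variable {E : Type*} [NormedAddCommGroup E] [NormedSpace ℝ E] {f : ℝ → E} {a b : ℝ}

theorem continuousOn_primitive_of_continuousOn (hf : ContinuousOn f (Icc a b)) :
    ContinuousOn (fun t => ∫ s in a..t, f s) (Icc a b) := by
  rcases le_total a b with hab | hba
  · simpa only [uIcc_of_le hab] using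
      continuousOn_primitive_interval' (hf.intervalIntegrable_of_Icc hab) left_mem_uIcc
  · exact (subsingleton_Icc_of_ge hba).continuousOn _

theorem hasDerivAt_primitive_of_continuousOn [CompleteSpace E] (hf : ContinuousOn f (Icc a b))
    {t : ℝ} (ht : t ∈ Ioo a b) : HasDerivAt (fun u => ∫ s in a..u, f s) (f t) t :=
  integral_hasDerivAt_right
    ((hf.mono (Icc_subset_Icc_right ht.2.le)).intervalIntegrable_of_Icc ht.1.le)
    ((hf.mono Ioo_subset_Icc_self).stronglyMeasurableAtFilter isOpen_Ioo t ht)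
    (hf.continuousAt (Icc_mem_nhds ht.1 ht.2))

end Primitive

theorem nonpos_of_le_integral_const_mul {d : ℝ → ℝ} {a b μ : ℝ} (hμ : 0 ≤ μ)
    (hd : ContinuousOn d (Icc a b)) (h : ∀ t ∈ Icc a b, d t ≤ ∫ s in a..t, μ * d s) :
    ∀ t ∈ Icc a b, d t ≤ 0 := by
  set G : ℝ → ℝ := fun t => ∫ s in a..t, d s
  have hdG : ∀ t ∈ Icc a b, d t ≤ μ * G t := fun t ht => by
    simpa only [integral_const_mul] using h t ht
  have hanti : AntitoneOn (fun t => exp (-(μ * t)) * G t) (Icc a b) := by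
    refine antitoneOn_of_hasDerivWithinAt_nonpos (convex_Icc a b)
      ((by fun_prop : Continuous fun t => exp (-(μ * t))).continuousOn.mul
        (continuousOn_primitive_of_continuousOn hd))
      (f' := fun t => exp (-(μ * t)) * (d t - μ * G t)) (fun t ht => ?_) (fun t ht => ?_)
    · rw [interior_Icc] at ht
      have hexp : HasDerivAt (fun t => exp (-(μ * t))) (exp (-(μ * t)) * -μ) t :=
        (((hasDerivAt_id t).const_mul μ).neg.congr_deriv (by simp)).exp
      refine (hexp.mul (hasDerivAt_primitive_of_continuousOn hd ht)).hasDerivWithinAt.congr_deriv ?_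
      ring
    · rw [interior_Icc] at ht
      exact mul_nonpos_of_nonneg_of_nonpos (exp_pos _).le
        (sub_nonpos.2 (hdG t (Ioo_subset_Icc_self ht)))
  intro t ht
  have hGt : exp (-(μ * t)) * G t ≤ 0 := by
    simpa [G] using hanti (left_mem_Icc.2 (ht.1.trans ht.2)) ht ht.1
  have hG : G t ≤ 0 := nonpos_of_mul_nonpos_right hGt (exp_pos _)
  exact (hdG t ht).trans (mul_nonpos_of_nonneg_of_nonpos hμ hG)

/-- Duhamel's formula: the solution of `u' = μ u + f`, `u a = 0`. -/
noncomputable def duhamel (μ a : ℝ) (f : ℝ → ℝ) (t : ℝ) : ℝ :=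
  ∫ s in a..t, exp (μ * (t - s)) * f s

theorem duhamel_eq_exp_mul_integral (μ a : ℝ) (f : ℝ → ℝ) (t : ℝ) :
    duhamel μ a f t = exp (μ * t) * ∫ s in a..t, exp (-(μ * s)) * f s := by
  rw [duhamel, ← integral_const_mul]
  congr 1 with s
  rw [← mul_assoc, ← exp_add]
  ring_nf

section Duhamel

variable {μ a b : ℝ} {f : ℝ → ℝ}

theorem continuousOn_duhamel (hf : ContinuousOn f (Icc a b)) :
    ContinuousOn (duhamel μ a f) (Icc a b) := by
  rw [funext (duhamel_eq_exp_mul_integral μ a f)]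
  exact (by fun_prop : Continuous fun t => exp (μ * t)).continuousOn.mul
    (continuousOn_primitive_of_continuousOn
      ((by fun_prop : Continuous fun s => exp (-(μ * s))).continuousOn.mul hf))

theorem hasDerivAt_duhamel (hf : ContinuousOn f (Icc a b)) {t : ℝ} (ht : t ∈ Ioo a b) :
    HasDerivAt (duhamel μ a f) (μ * duhamel μ a f t + f t) t := by
  rw [funext (duhamel_eq_exp_mul_integral μ a f)]
  have hexp : HasDerivAt (fun t => exp (μ * t)) (exp (μ * t) * μ) t :=
    (((hasDerivAt_id t).const_mul μ).congr_deriv (mul_one μ)).exp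
  have hprim := hasDerivAt_primitive_of_continuousOn
    ((by fun_prop : Continuous fun s => exp (-(μ * s))).continuousOn.mul hf) ht
  refine (hexp.mul hprim).congr_deriv ?_
  have hinv : exp (μ * t) * exp (-(μ * t)) = 1 := by rw [← exp_add, add_neg_cancel, exp_zero]
  simp only [Pi.mul_apply]
  linear_combination f t * hinv

theorem duhamel_eq_sub_add_integral {F : ℝ → ℝ} (hFc : ContinuousOn F (Icc a b))
    (hF : ∀ t ∈ Ioo a b, HasDerivAt F (f t) t) (hf : ContinuousOn f (Icc a b)) {t : ℝ}
    (ht : t ∈ Icc a b) : duhamel μ a f t = F t - F a + ∫ s in a..t, μ * duhamel μ a f s := by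
  have hsub : Icc a t ⊆ Icc a b := Icc_subset_Icc_right ht.2
  have hu := continuousOn_duhamel (μ := μ) hf
  have hFTC := integral_eq_sub_of_hasDerivAt_of_le ht.1 ((hu.sub hFc).mono hsub)
    (fun s hs => ((hasDerivAt_duhamel hf (Ioo_subset_Ioo_right ht.2 hs)).sub
      (hF s (Ioo_subset_Ioo_right ht.2 hs))).congr_deriv (add_sub_cancel_right _ _))
    ((continuousOn_const.mul (hu.mono hsub)).intervalIntegrable_of_Icc ht.1)
  simp only [Pi.sub_apply, duhamel, integral_same] at hFTC ⊢
  linarith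

end Duhamel

theorem stmt6_general (a b : ℝ) (lam lam' y : ℝ → ℝ) (μ : ℝ) (hμ : 0 ≤ μ)
    (hderiv : ∀ t ∈ Set.Icc a b, HasDerivWithinAt lam (lam' t) (Set.Icc a b) t)
    (hlam' : ContinuousOn lam' (Set.Icc a b))
    (hlam0 : lam a = 0)
    (hy : ContinuousOn y (Set.Icc a b))
    (hineq : ∀ t ∈ Set.Icc a b, y t ≤ lam t + ∫ s in a..t, μ * y s) :
    ∀ t ∈ Set.Icc a b, y t ≤ ∫ s in a..t, Real.exp (μ * (t - s)) * lam' s := by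
  have hlamc : ContinuousOn lam (Icc a b) := fun s hs => (hderiv s hs).continuousWithinAt
  have hlam : ∀ s ∈ Ioo a b, HasDerivAt lam (lam' s) s := fun s hs =>
    (hderiv s (Ioo_subset_Icc_self hs)).hasDerivAt (Icc_mem_nhds hs.1 hs.2)
  have hu := continuousOn_duhamel (μ := μ) hlam'
  have hgap : ∀ s ∈ Icc a b,
      y s - duhamel μ a lam' s ≤ ∫ r in a..s, μ * (y r - duhamel μ a lam' r) := by
    intro s hs
    have hsub : Icc a s ⊆ Icc a b := Icc_subset_Icc_right hs.2
    have hsolution := duhamel_eq_sub_add_integral (μ := μ) hlamc hlam hlam' hs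
    simp only [mul_sub]
    have hint : ∀ g : ℝ → ℝ, ContinuousOn g (Icc a b) →
        IntervalIntegrable (fun r => μ * g r) MeasureTheory.volume a s := fun g hg =>
      (continuousOn_const.mul (hg.mono hsub)).intervalIntegrable_of_Icc hs.1
    rw [integral_sub (hint y hy) (hint _ hu)]
    linarith [hineq s hs]
  exact fun t ht => sub_nonpos.1 (nonpos_of_le_integral_const_mul hμ (hy.sub hu) hgap t ht)

/-- Gronwall variant: if `λ` is continuously differentiable on `[a, b]` with
`λ a = 0`, `μ ≥ 0`, and the continuous function `y` satisfies
`y t ≤ λ t + ∫_a^t μ y(s) ds` on `[a, b]`, then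
`y t ≤ ∫_a^t e^{μ (t - s)} λ'(s) ds` on `[a, b]`. -/
theorem stmt6 (a b : ℝ) (hab : a ≤ b) (lam lam' y : ℝ → ℝ) (μ : ℝ) (hμ : 0 ≤ μ)
    (hderiv : ∀ t ∈ Set.Icc a b, HasDerivWithinAt lam (lam' t) (Set.Icc a b) t)
    (hlam' : ContinuousOn lam' (Set.Icc a b))
    (hlam0 : lam a = 0)
    (hy : ContinuousOn y (Set.Icc a b))
    (hineq : ∀ t ∈ Set.Icc a b, y t ≤ lam t + ∫ s in a..t, μ * y s) :
    ∀ t ∈ Set.Icc a b, y t ≤ ∫ s in a..t, Real.exp (μ * (t - s)) * lam' s :=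
  stmt6_general a b lam lam' y μ hμ hderiv hlam' hlam0 hy hineq
end

section
/- Let L₁ > 0, L₂ > 0, M > 0, N ≥ 1, c̄ ∈ (0, 1), and define t̄ := sup{ t > 0 : e^{L₂ s} − (L₂ + c̄ L₂²/(L₁√N)) s − 1 < 0 for all s ∈ (0, t] }. Define the functions H_κ : [0, ∞) → ℝ recursively by H₁(t) := M t and H_{κ+1}(t) := ∫_0^t e^{L₂(t−s)} L₁ √N H_κ(s) ds for κ ≥ 1. Then for every integer m ≥ 1 it holds H_m(t) ≤ c̄^{m−1} M t for all t ∈ [0, t̄]. -/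
/-!
On `[0, t̄]` the defining property of `t̄` gives, by continuity up to the endpoint,
`e^{L₂ t} - 1 - L₂ t ≤ c̄ L₂² t / (L₁ √N)`. Since `∫₀ᵗ e^{L₂(t-s)} s ds = (e^{L₂ t} - 1 - L₂ t) / L₂²`,
the bound `H_κ(s) ≤ c̄^{κ-1} M s` feeds through one step of the recursion to
`H_{κ+1}(t) ≤ L₁ √N c̄^{κ-1} M (e^{L₂ t} - 1 - L₂ t) / L₂² ≤ c̄^κ M t`.
-/

open Real Set intervalIntegral

theorem Continuous.nonpos_of_le_sSup {f : ℝ → ℝ} (hf : Continuous f) {u : ℝ} (hu : 0 < u)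
    (hle : u ≤ sSup {t : ℝ | 0 < t ∧ ∀ s : ℝ, 0 < s → s ≤ t → f s < 0}) : f u ≤ 0 := by
  set S := {t : ℝ | 0 < t ∧ ∀ s : ℝ, 0 < s → s ≤ t → f s < 0}
  have hS : S.Nonempty := by
    by_contra hS
    rw [not_nonempty_iff_eq_empty.mp hS, Real.sSup_empty] at hle
    exact hle.not_gt hu
  have hneg : Ioo 0 u ⊆ {v | f v ≤ 0} := fun v ⟨hv0, hvu⟩ => by
    obtain ⟨t, ⟨-, ht⟩, hvt⟩ := exists_lt_of_lt_csSup hS (hvu.trans_le hle)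
    exact (ht v hv0 hvt.le).le
  have hclosure := closure_minimal hneg (isClosed_le hf continuous_const)
  rw [closure_Ioo hu.ne] at hclosure
  exact hclosure (right_mem_Icc.mpr hu.le)

theorem continuous_integral_exp_mul_sub_mul {a : ℝ} {g : ℝ → ℝ} (hg : Continuous g) :
    Continuous fun t => ∫ s in (0:ℝ)..t, exp (a * (t - s)) * g s :=
  continuous_parametric_intervalIntegral_of_continuous (by fun_prop) continuous_id

theorem integral_exp_mul_sub_mul_self {a : ℝ} (ha : a ≠ 0) (t : ℝ) :
    ∫ s in (0:ℝ)..t, exp (a * (t - s)) * s = (exp (a * t) - 1 - a * t) / a ^ 2 := by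
  have hderiv : ∀ s ∈ uIcc (0:ℝ) t,
      HasDerivAt (fun s => -(exp (a * (t - s)) * (a * s + 1)) / a ^ 2)
        (exp (a * (t - s)) * s) s := by
    intro s _
    have hexp : HasDerivAt (fun s => exp (a * (t - s))) (exp (a * (t - s)) * (a * -1)) s :=
      (((hasDerivAt_id s).const_sub t).const_mul a).exp
    have hlin : HasDerivAt (fun s => a * s + 1) a s := by
      simpa using ((hasDerivAt_id s).const_mul a).add_const 1
    refine ((hexp.mul hlin).neg.div_const (a ^ 2)).congr_deriv ?_
    field_simp
    ring
  rw [integral_eq_sub_of_hasDerivAt hderiv (by apply Continuous.intervalIntegrable; fun_prop)]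
  simp only [sub_self, mul_zero, exp_zero, one_mul, sub_zero, zero_add, mul_one]
  field_simp
  ring

theorem integral_exp_mul_sub_mul_le {a K t : ℝ} {g : ℝ → ℝ} (ha : a ≠ 0) (ht : 0 ≤ t)
    (hg : Continuous g) (hgK : ∀ s ∈ Icc 0 t, g s ≤ K * s) :
    ∫ s in (0:ℝ)..t, exp (a * (t - s)) * g s ≤ K * ((exp (a * t) - 1 - a * t) / a ^ 2) := by
  calc ∫ s in (0:ℝ)..t, exp (a * (t - s)) * g s
      ≤ ∫ s in (0:ℝ)..t, K * (exp (a * (t - s)) * s) := by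
        refine integral_mono_on ht (by apply Continuous.intervalIntegrable; fun_prop)
          (by apply Continuous.intervalIntegrable; fun_prop) fun s hs => ?_
        rw [mul_left_comm]
        exact mul_le_mul_of_nonneg_left (hgK s hs) (exp_pos _).le
    _ = K * ((exp (a * t) - 1 - a * t) / a ^ 2) := by
        rw [integral_const_mul, integral_exp_mul_sub_mul_self ha]

theorem stmt10_general (L₁ L₂ M N c : ℝ) (hL₁ : 0 < L₁) (hL₂ : 0 < L₂) (hM : 0 < M)
    (hN : 1 ≤ N) (hc0 : 0 < c)
    (tbar : ℝ)
    (htbar : tbar = sSup {t : ℝ | 0 < t ∧ ∀ s : ℝ, 0 < s → s ≤ t →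
      Real.exp (L₂ * s) - (L₂ + c * L₂ ^ 2 / (L₁ * Real.sqrt N)) * s - 1 < 0})
    (H : ℕ → ℝ → ℝ)
    (hH1 : ∀ t : ℝ, H 1 t = M * t)
    (hHrec : ∀ κ : ℕ, 1 ≤ κ → ∀ t : ℝ,
      H (κ + 1) t = ∫ s in (0:ℝ)..t, Real.exp (L₂ * (t - s)) * (L₁ * Real.sqrt N * H κ s)) :
    ∀ m : ℕ, 1 ≤ m → ∀ t ∈ Set.Icc (0:ℝ) tbar, H m t ≤ c ^ (m - 1) * (M * t) := by
  have hL : 0 < L₁ * √N := mul_pos hL₁ (by positivity)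
  have hexp : ∀ u ∈ Icc 0 tbar, exp (L₂ * u) - 1 - L₂ * u ≤ c * L₂ ^ 2 / (L₁ * √N) * u := by
    rintro u ⟨hu0, hut⟩
    rcases hu0.eq_or_lt with rfl | hu0
    · simp
    have := (by fun_prop : Continuous fun s =>
      exp (L₂ * s) - (L₂ + c * L₂ ^ 2 / (L₁ * √N)) * s - 1).nonpos_of_le_sSup hu0 (htbar ▸ hut)
    linarith
  have hcont : ∀ m, 1 ≤ m → Continuous (H m) := by
    refine Nat.le_induction (by simp only [funext hH1]; fun_prop) fun n hn ih => ?_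
    simp only [funext (hHrec n hn)]
    exact continuous_integral_exp_mul_sub_mul (by fun_prop)
  refine Nat.le_induction (by simp [hH1]) fun n hn ih t ht => ?_
  rw [hHrec n hn, Nat.add_sub_cancel]
  calc _ ≤ L₁ * √N * (c ^ (n - 1) * M) * ((exp (L₂ * t) - 1 - L₂ * t) / L₂ ^ 2) :=
        integral_exp_mul_sub_mul_le hL₂.ne' ht.1 ((hcont n hn).const_mul (L₁ * √N)) fun s hs => by
          have := mul_le_mul_of_nonneg_left (ih s ⟨hs.1, hs.2.trans ht.2⟩) hL.le
          linarith
    _ ≤ L₁ * √N * (c ^ (n - 1) * M) * (c * L₂ ^ 2 / (L₁ * √N) * t / L₂ ^ 2) := by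
        gcongr
        exact hexp t ht
    _ = c ^ n * (M * t) := by
        rw [← pow_sub_one_mul (show n ≠ 0 by omega) c]
        field_simp

/-- With `t̄ := sup { t > 0 : e^{L₂ s} − (L₂ + c̄ L₂²/(L₁ √N)) s − 1 < 0 on (0, t] }`
and the functions `H_κ` defined by `H₁(t) = M t`,
`H_{κ+1}(t) = ∫_0^t e^{L₂(t−s)} L₁ √N H_κ(s) ds`, it holds
`H_m(t) ≤ c̄^{m−1} M t` for all `m ≥ 1` and `t ∈ [0, t̄]`. -/
theorem stmt10 (L₁ L₂ M N c : ℝ) (hL₁ : 0 < L₁) (hL₂ : 0 < L₂) (hM : 0 < M)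
    (hN : 1 ≤ N) (hc0 : 0 < c) (hc1 : c < 1)
    (tbar : ℝ)
    (htbar : tbar = sSup {t : ℝ | 0 < t ∧ ∀ s : ℝ, 0 < s → s ≤ t →
      Real.exp (L₂ * s) - (L₂ + c * L₂ ^ 2 / (L₁ * Real.sqrt N)) * s - 1 < 0})
    (H : ℕ → ℝ → ℝ)
    (hH1 : ∀ t : ℝ, H 1 t = M * t)
    (hHrec : ∀ κ : ℕ, 1 ≤ κ → ∀ t : ℝ,
      H (κ + 1) t = ∫ s in (0:ℝ)..t, Real.exp (L₂ * (t - s)) * (L₁ * Real.sqrt N * H κ s)) :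
    ∀ m : ℕ, 1 ≤ m → ∀ t ∈ Set.Icc (0:ℝ) tbar, H m t ≤ c ^ (m - 1) * (M * t) :=
  stmt10_general L₁ L₂ M N c hL₁ hL₂ hM hN hc0 tbar htbar H hH1 hHrec
end

section
/- Let L₁ > 0, L₂ > 0, M > 0, v > 0, N ≥ 1, c ∈ (0, 1), and 0 ≤ λ̲ ≤ λ̄ < 1. Suppose δt > 0 satisfies δt < (1 − λ̲) v / (L₁ √N (c M + λ̄ v) + λ̲ L₂ v), and suppose d > 0 satisfies both d ≤ 2 (1 − λ̲) v δt / (1 + (L₁ √N + L₂) δt) and d ≤ 2 (1 − λ̲) v δt − 2 (L₁ √N (c M + λ̄ v) + λ̲ L₂ v) δt². Then for all t ∈ [0, δt]: L₁ √N ( d (δt − t)/(2 δt) + (c M + λ̄ v) t ) + d/(2 δt) + L₂ ( (δt − t) d /(2 δt) + λ̲ v t ) + λ̲ v ≤ v. -/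
/-- Under the space-time discretization restrictions on `δt` and `d`, the total
magnitude bound of the hybrid feedback law holds:
`L₁ √N (d(δt−t)/(2δt) + (cM + λ̄v)t) + d/(2δt) + L₂((δt−t)d/(2δt) + λ̲vt) + λ̲v ≤ v`
for all `t ∈ [0, δt]`.  Here `lo = λ̲` and `hi = λ̄`. -/
theorem stmt14 (L₁ L₂ M v N c lo hi δt d : ℝ)
    (hL₁ : 0 < L₁) (hL₂ : 0 < L₂) (hM : 0 < M) (hv : 0 < v) (hN : 1 ≤ N)
    (hc0 : 0 < c) (hc1 : c < 1)
    (hlo : 0 ≤ lo) (hlohi : lo ≤ hi) (hhi : hi < 1)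
    (hδt : 0 < δt)
    (hδtu : δt < (1 - lo) * v / (L₁ * Real.sqrt N * (c * M + hi * v) + lo * L₂ * v))
    (hd : 0 < d)
    (hd1 : d ≤ 2 * (1 - lo) * v * δt / (1 + (L₁ * Real.sqrt N + L₂) * δt))
    (hd2 : d ≤ 2 * (1 - lo) * v * δt
      - 2 * (L₁ * Real.sqrt N * (c * M + hi * v) + lo * L₂ * v) * δt ^ 2) :
    ∀ t ∈ Set.Icc (0:ℝ) δt,
      L₁ * Real.sqrt N * (d * (δt - t) / (2 * δt) + (c * M + hi * v) * t)
        + d / (2 * δt)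
        + L₂ * ((δt - t) * d / (2 * δt) + lo * v * t)
        + lo * v ≤ v := by
  intro t ht
  obtain ⟨ht0, ht1⟩ := ht
  set S := Real.sqrt N with hS
  have hS0 : 0 < S := Real.sqrt_pos.mpr (by linarith)
  have h2δt : 0 < 2 * δt := by linarith
  have hden : 0 < 1 + (L₁ * S + L₂) * δt := by positivity
  have hE0 : d * (1 + (L₁ * S + L₂) * δt) ≤ 2 * (1 - lo) * v * δt :=
    (le_div_iff₀ hden).mp hd1
  have hE1 : 2 * (L₁ * S * (c * M + hi * v) + lo * L₂ * v) * δt ^ 2 + d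
      ≤ 2 * (1 - lo) * v * δt := by linarith
  have hP0 := mul_le_mul_of_nonneg_left hE0 (sub_nonneg.mpr ht1)
  have hP1 := mul_le_mul_of_nonneg_left hE1 ht0
  have big : L₁ * S * (d * (δt - t) + (c * M + hi * v) * t * (2 * δt)) + d
      + L₂ * ((δt - t) * d + lo * v * t * (2 * δt)) + lo * v * (2 * δt)
      ≤ v * (2 * δt) := by
    have hδ : 0 < δt := hδt
    nlinarith [hP0, hP1, mul_pos hδ hδ]
  have key : L₁ * S * (d * (δt - t) / (2 * δt) + (c * M + hi * v) * t)
        + d / (2 * δt)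
        + L₂ * ((δt - t) * d / (2 * δt) + lo * v * t)
        + lo * v
      = (L₁ * S * (d * (δt - t) + (c * M + hi * v) * t * (2 * δt)) + d
        + L₂ * ((δt - t) * d + lo * v * t * (2 * δt)) + lo * v * (2 * δt)) / (2 * δt) := by
    field_simp
  rw [key, div_le_iff₀ h2δt]
  exact big
end

section
/- Let G be a directed graph on the vertex set {1,…,N}, with neighbor sets N_κ, and for each vertex κ let f_κ : ℝⁿ × (ℝⁿ)^{N_κ} → ℝⁿ be globally Lipschitz. Fix m ≥ 1 and assign to each vertex κ an initial point x_{κ,G} ∈ ℝⁿ. Suppose a vertex i satisfies N_i^{m+1} = ∅ and a neighbor ℓ ∈ N_i satisfies N_ℓ^{m+1} = ∅. Let (χ_κ^{[i]})_{κ ∈ N̄_i^m} be the solution on [0, ∞) of the coupled system χ̇_κ(t) = f_κ(χ_κ(t), (χ_j(t))_{j ∈ N_κ}), κ ∈ N̄_i^m, with χ_κ(0) = x_{κ,G} (well defined since N_κ ⊆ N̄_i^m for each κ ∈ N̄_i^m by the assumption N_i^{m+1} = ∅), and let (χ_κ^{[ℓ]})_{κ ∈ N̄_ℓ^m} be the analogously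 defined solution for ℓ, with the same initial points x_{κ,G} for all κ ∈ N̄_i^m ∩ N̄_ℓ^m (consistent cell configurations). Then χ_ℓ^{[ℓ]}(t) = χ_ℓ^{[i]}(t) for all t ≥ 0. -/
/-!
Restricted to `N̄_ℓ^m`, both `χ^{[ℓ]}` and `χ^{[i]}` solve one closed subsystem:
`N̄_ℓ^m ⊆ N̄_i^m` because `ℓ ∈ N_i` and `N_i^{m+1} = ∅`, and every neighbor of a vertex of
`N̄_ℓ^m` lies in `N̄_ℓ^m` because `N_ℓ^{m+1} = ∅`. Extended by `0` outside `N̄_ℓ^m`, the two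
restrictions solve the same globally Lipschitz ODE on `(ℝⁿ)^N` with the same initial value,
so they coincide by uniqueness of solutions.
-/

/-- `hasPath E m j i` : there is a directed path of length `m` from `j` to `i`. -/
def hasPath {V : Type*} (E : V → V → Prop) : ℕ → V → V → Prop
  | 0, j, i => j = i
  | (n + 1), j, i => ∃ k, E j k ∧ hasPath E n k i

/-- The neighbor set `N_i` of `i` : vertices `j ≠ i` with an edge `(j, i)`. -/
def nbr {V : Type*} (E : V → V → Prop) (i : V) : Set V := {j | j ≠ i ∧ E j i}

/-- `nset E i m` = `N_i^m` : for `m ≥ 1`, the vertices `j ≠ i` from which `i` is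
reachable by a path of length `m` but by no shorter path; `N_i^0 = {i}`. -/
def nset {V : Type*} (E : V → V → Prop) (i : V) : ℕ → Set V
  | 0 => {i}
  | (m + 1) => {j | j ≠ i ∧ hasPath E (m + 1) j i ∧ ∀ k < m + 1, ¬ hasPath E k j i}

/-- The `m`-neighbor set `N̄_i^m = ⋃_{k ≤ m} N_i^k` of `i`. -/
def nbar {V : Type*} (E : V → V → Prop) (i : V) (m : ℕ) : Set V :=
  ⋃ k ∈ Set.Iic m, nset E i k


section Graph

variable {V : Type*} {E : V → V → Prop} {m : ℕ}

lemma hasPath_snoc : ∀ {k : ℕ} {j x i : V}, hasPath E k j x → E x i → hasPath E (k + 1) j i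
  | 0, _, _, _, rfl, he => ⟨_, he, rfl⟩
  | _ + 1, _, _, _, ⟨w, hw, hp⟩, he => ⟨w, hw, hasPath_snoc hp he⟩

lemma hasPath_of_mem_nset {x j : V} : ∀ {k : ℕ}, j ∈ nset E x k → hasPath E k j x
  | 0, hj => hj
  | _ + 1, hj => hj.2.1

lemma mem_nbar_iff {x j : V} : j ∈ nbar E x m ↔ ∃ k ≤ m, j ∈ nset E x k := by
  simp [nbar]

lemma self_mem_nbar (x : V) : x ∈ nbar E x m :=
  mem_nbar_iff.2 ⟨0, Nat.zero_le m, rfl⟩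

lemma mem_nset_find {x j : V} [DecidablePred fun d => hasPath E d j x]
    (h : ∃ d, hasPath E d j x) : j ∈ nset E x (Nat.find h) := by
  have hspec := Nat.find_spec h
  rcases hd : Nat.find h with _ | d
  · rw [hd] at hspec
    exact hspec
  · refine ⟨fun hjx => ?_, hd ▸ hspec, fun k hk => Nat.find_min h (hd ▸ hk)⟩
    have : Nat.find h ≤ 0 := Nat.find_min' h hjx
    omega

lemma mem_nbar_of_hasPath {x j : V} {k : ℕ} (hempty : nset E x (m + 1) = ∅) (hk : k ≤ m + 1)
    (hp : hasPath E k j x) : j ∈ nbar E x m := by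
  classical
  have hex : ∃ d, hasPath E d j x := ⟨k, hp⟩
  have hmem := mem_nset_find hex
  have hne : Nat.find hex ≠ m + 1 := fun h => by
    rw [h, hempty] at hmem
    exact hmem
  exact mem_nbar_iff.2 ⟨Nat.find hex, by have := Nat.find_min' hex hp; omega, hmem⟩

lemma nbar_subset_nbar_of_mem_nbr {i ℓ : V} (hℓ : ℓ ∈ nbr E i) (hempty : nset E i (m + 1) = ∅) :
    nbar E ℓ m ⊆ nbar E i m := fun κ hκ => by
  obtain ⟨k, hk, hκ⟩ := mem_nbar_iff.1 hκ
  exact mem_nbar_of_hasPath hempty (by omega) (hasPath_snoc (hasPath_of_mem_nset hκ) hℓ.2)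

lemma mem_nbar_of_mem_nbr {x κ j : V} (hempty : nset E x (m + 1) = ∅) (hκ : κ ∈ nbar E x m)
    (hj : j ∈ nbr E κ) : j ∈ nbar E x m := by
  obtain ⟨k, hk, hκ⟩ := mem_nbar_iff.1 hκ
  exact mem_nbar_of_hasPath hempty (by omega)
    (show hasPath E (k + 1) j x from ⟨κ, hj.2, hasPath_of_mem_nset hκ⟩)

end Graph

theorem LipschitzWith.pi {α ι : Type*} [PseudoEMetricSpace α] [Fintype ι] {π : ι → Type*}
    [∀ i, PseudoEMetricSpace (π i)] {f : α → ∀ i, π i} {K : ι → NNReal}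
    (h : ∀ i, LipschitzWith (K i) fun x => f x i) : LipschitzWith (Finset.univ.sup K) f :=
  fun x y => edist_pi_le_iff.2 fun i =>
    ((h i).weaken (Finset.le_sup (Finset.mem_univ i))) x y

section CoupledSystem

open Set

variable {ι E : Type*} [NormedAddCommGroup E] [NormedSpace ℝ E]
  {S : Set ι} {g : ι → (ι → E) → E}

lemma hasDerivWithinAt_indicator_of_dependsOn (hg : ∀ κ ∈ S, DependsOn (g κ) S)
    {χ : ι → ℝ → E} {s : Set ℝ} {t : ℝ}
    (hχ : ∀ κ ∈ S, HasDerivWithinAt (χ κ) (g κ (χ · t)) s t) :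
    HasDerivWithinAt (fun t => S.indicator (χ · t))
      (S.indicator fun κ => g κ (S.indicator (χ · t))) s t := by
  refine hasDerivWithinAt_pi.2 fun κ => ?_
  by_cases hκ : κ ∈ S
  · simp only [indicator_of_mem hκ]
    rw [hg κ hκ fun j hj => indicator_of_mem hj _]
    exact hχ κ hκ
  · simp only [indicator_of_notMem hκ]
    exact hasDerivWithinAt_const t s 0

theorem ODE_solution_unique_of_dependsOn [Fintype ι]
    (hgLip : ∀ κ ∈ S, ∃ K, LipschitzWith K (g κ))
    (hg : ∀ κ ∈ S, DependsOn (g κ) S) {χ₁ χ₂ : ι → ℝ → E} {t₀ : ℝ}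
    (h₁ : ∀ κ ∈ S, ∀ t ∈ Ici t₀, HasDerivWithinAt (χ₁ κ) (g κ (χ₁ · t)) (Ici t₀) t)
    (h₂ : ∀ κ ∈ S, ∀ t ∈ Ici t₀, HasDerivWithinAt (χ₂ κ) (g κ (χ₂ · t)) (Ici t₀) t)
    (h0 : ∀ κ ∈ S, χ₁ κ t₀ = χ₂ κ t₀) :
    ∀ κ ∈ S, ∀ t ∈ Ici t₀, χ₁ κ t = χ₂ κ t := by
  choose! K hK using hgLip
  set F : (ι → E) → ι → E := fun b => S.indicator fun κ => g κ b
  have hF : LipschitzWith (Finset.univ.sup K) F := LipschitzWith.pi fun κ => by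
    by_cases hκ : κ ∈ S
    · simpa only [F, indicator_of_mem hκ] using hK κ hκ
    · simpa only [F, indicator_of_notMem hκ] using LipschitzWith.const' 0
  have hderiv : ∀ χ : ι → ℝ → E,
      (∀ κ ∈ S, ∀ t ∈ Ici t₀, HasDerivWithinAt (χ κ) (g κ (χ · t)) (Ici t₀) t) →
      ∀ t ∈ Ici t₀, HasDerivWithinAt (fun t => S.indicator (χ · t))
        (F (S.indicator (χ · t))) (Ici t₀) t :=
    fun χ hχ t ht => hasDerivWithinAt_indicator_of_dependsOn hg fun κ hκ => hχ κ hκ t ht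
  intro κ hκ t ht
  have heq := ODE_solution_unique_of_mem_Icc_right (v := fun _ => F) (s := fun _ => univ)
    (fun _ _ => hF.lipschitzOnWith)
    (fun s hs => (hderiv χ₁ h₁ s hs.1).continuousWithinAt.mono Icc_subset_Ici_self)
    (fun s hs => (hderiv χ₁ h₁ s hs.1).mono (Ici_subset_Ici.2 hs.1)) (fun _ _ => trivial)
    (fun s hs => (hderiv χ₂ h₂ s hs.1).continuousWithinAt.mono Icc_subset_Ici_self)
    (fun s hs => (hderiv χ₂ h₂ s hs.1).mono (Ici_subset_Ici.2 hs.1)) (fun _ _ => trivial)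
    (funext fun j => by by_cases hj : j ∈ S <;> simp [hj, h0]) ⟨ht, le_refl t⟩
  simpa [hκ] using congrFun heq κ

end CoupledSystem

theorem stmt16_general (Nv n : ℕ) (E : Fin Nv → Fin Nv → Prop)
    (f : Fin Nv → EuclideanSpace ℝ (Fin n) → (Fin Nv → EuclideanSpace ℝ (Fin n)) →
      EuclideanSpace ℝ (Fin n))
    (hdep : ∀ κ x b b', (∀ j ∈ nbr E κ, b j = b' j) → f κ x b = f κ x b')
    (hLip : ∀ κ, ∃ K : NNReal,
      LipschitzWith K
        (fun p : EuclideanSpace ℝ (Fin n) × (Fin Nv → EuclideanSpace ℝ (Fin n)) =>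
          f κ p.1 p.2))
    (m : ℕ)
    (xG : Fin Nv → EuclideanSpace ℝ (Fin n))
    (i ℓ : Fin Nv) (hℓ : ℓ ∈ nbr E i)
    (hiempty : nset E i (m + 1) = ∅) (hlempty : nset E ℓ (m + 1) = ∅)
    (χi χl : Fin Nv → ℝ → EuclideanSpace ℝ (Fin n))
    (hχi0 : ∀ κ ∈ nbar E i m, χi κ 0 = xG κ)
    (hχi : ∀ κ ∈ nbar E i m, ∀ t ∈ Set.Ici (0:ℝ),
      HasDerivWithinAt (χi κ) (f κ (χi κ t) (fun j => χi j t)) (Set.Ici 0) t)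
    (hχl0 : ∀ κ ∈ nbar E ℓ m, χl κ 0 = xG κ)
    (hχl : ∀ κ ∈ nbar E ℓ m, ∀ t ∈ Set.Ici (0:ℝ),
      HasDerivWithinAt (χl κ) (f κ (χl κ t) (fun j => χl j t)) (Set.Ici 0) t) :
    ∀ t ∈ Set.Ici (0:ℝ), χl ℓ t = χi ℓ t := by
  have hsub : nbar E ℓ m ⊆ nbar E i m := nbar_subset_nbar_of_mem_nbr hℓ hiempty
  have hdepS : ∀ κ ∈ nbar E ℓ m,
      DependsOn (fun b : Fin Nv → EuclideanSpace ℝ (Fin n) => f κ (b κ) b) (nbar E ℓ m) :=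
    fun κ hκ b b' hb => by
      simp only [hb κ hκ]
      exact hdep κ _ _ _ fun j hj => hb j (mem_nbar_of_mem_nbr hlempty hκ hj)
  have hLipS : ∀ κ ∈ nbar E ℓ m, ∃ K,
      LipschitzWith K fun b : Fin Nv → EuclideanSpace ℝ (Fin n) => f κ (b κ) b := fun κ _ => by
    obtain ⟨K, hK⟩ := hLip κ
    have hpair : LipschitzWith 1 fun b : Fin Nv → EuclideanSpace ℝ (Fin n) => (b κ, b) := by
      simpa using (LipschitzWith.eval (α := fun _ => EuclideanSpace ℝ (Fin n)) κ).prodMk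
        LipschitzWith.id
    exact ⟨K, by simpa only [mul_one, Function.comp_def] using hK.comp hpair⟩
  exact ODE_solution_unique_of_dependsOn hLipS hdepS hχl (fun κ hκ => hχi κ (hsub hκ))
    (fun κ hκ => (hχl0 κ hκ).trans (hχi0 κ (hsub hκ)).symm) ℓ (self_mem_nbar ℓ)

/-- If `N_i^{m+1} = ∅`, `ℓ ∈ N_i` and `N_ℓ^{m+1} = ∅`, then the reference
trajectory of `ℓ` and its estimate by `i` (solutions of the decoupled coupled
systems on `N̄_i^m` and `N̄_ℓ^m` with the same initial points, i.e. consistent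
cell configurations) coincide: `χ_ℓ^{[ℓ]}(t) = χ_ℓ^{[i]}(t)` for all `t ≥ 0`.
Here each `f κ x b` depends only on `x` and the values `b j` for `j ∈ N_κ`,
and is globally Lipschitz. -/
theorem stmt16 (Nv n : ℕ) (E : Fin Nv → Fin Nv → Prop)
    (f : Fin Nv → EuclideanSpace ℝ (Fin n) → (Fin Nv → EuclideanSpace ℝ (Fin n)) →
      EuclideanSpace ℝ (Fin n))
    (hdep : ∀ κ x b b', (∀ j ∈ nbr E κ, b j = b' j) → f κ x b = f κ x b')
    (hLip : ∀ κ, ∃ K : NNReal,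
      LipschitzWith K
        (fun p : EuclideanSpace ℝ (Fin n) × (Fin Nv → EuclideanSpace ℝ (Fin n)) =>
          f κ p.1 p.2))
    (m : ℕ) (hm : 1 ≤ m)
    (xG : Fin Nv → EuclideanSpace ℝ (Fin n))
    (i ℓ : Fin Nv) (hℓ : ℓ ∈ nbr E i)
    (hiempty : nset E i (m + 1) = ∅) (hlempty : nset E ℓ (m + 1) = ∅)
    (χi χl : Fin Nv → ℝ → EuclideanSpace ℝ (Fin n))
    (hχi0 : ∀ κ ∈ nbar E i m, χi κ 0 = xG κ)
    (hχi : ∀ κ ∈ nbar E i m, ∀ t ∈ Set.Ici (0:ℝ),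
      HasDerivWithinAt (χi κ) (f κ (χi κ t) (fun j => χi j t)) (Set.Ici 0) t)
    (hχl0 : ∀ κ ∈ nbar E ℓ m, χl κ 0 = xG κ)
    (hχl : ∀ κ ∈ nbar E ℓ m, ∀ t ∈ Set.Ici (0:ℝ),
      HasDerivWithinAt (χl κ) (f κ (χl κ t) (fun j => χl j t)) (Set.Ici 0) t) :
    ∀ t ∈ Set.Ici (0:ℝ), χl ℓ t = χi ℓ t :=
  stmt16_general Nv n E f hdep hLip m xG i ℓ hℓ hiempty hlempty χi χl hχi0 hχi hχl0 hχl
end
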